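/- Let φ: A* → A* be a non-erasing morphism over a finite alphabet A satisfying alph(φ^n(a)) = alph(φ(a)) for every a ∈ A and every n ≥ 1. Let A' be a leaf of the tree of invariant subalphabets of φ, i.e., a minimal element of the family of nonempty sets B ⊆ A satisfying alph(φ(B)) = B and B = alph(φ(a)) for some unbounded letter a ∈ B. Then for all unbounded letters a, b ∈ A', the letter b occurs in φ(a). -/

import Mathlib

/-- The extension of the morphism given by `φ` on letters to a morphism on words. -/
def extM {A B : Type*} (φ : A → List B) (w : List A) : List B := w.flatMap φ

/-- The `k`-th power `u^k` of a word `u`. -/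
def wpow {A : Type*} (u : List A) (k : ℕ) : List A := (List.replicate k u).flatten

/-- A word `v` is primitive if `v = u^k` implies `k = 1`. -/
def Primitive {A : Type*} (v : List A) : Prop :=
  v ≠ [] ∧ ∀ (u : List A) (k : ℕ), v = wpow u k → k = 1

/-- The language of the D0L-system `(A, φ, w)`: all factors of the words `φ^n(w)`. -/
def LangD0L {A : Type*} (φ : A → List A) (w : List A) : Set (List A) :=
  {v | ∃ n : ℕ, v <:+: (extM φ)^[n] w}

/-- `fact(Ψ(L))`: all factors of `Ψ`-images of elements of `L`. -/
def factImg {A B : Type*} (Ψ : A → List B) (L : Set (List A)) : Set (List B) :=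
  {v | ∃ u ∈ L, v <:+: extM Ψ u}

/-- The language of the HD0L-system `(A, φ, w, Ψ)`. -/
def LangHD0L {A B : Type*} (φ : A → List A) (w : List A) (Ψ : A → List B) : Set (List B) :=
  factImg Ψ (LangD0L φ w)

/-- A morphism is non-erasing if no letter is mapped to the empty word. -/
def NonErasing {A B : Type*} (φ : A → List B) : Prop := ∀ a, φ a ≠ []

/-- A letter `b` is bounded (w.r.t. `φ`) if the lengths `|φ^n(b)|` are bounded. -/
def BddLetter {A : Type*} (φ : A → List A) (b : A) : Prop :=
  ∃ C : ℕ, ∀ n : ℕ, ((extM φ)^[n] [b]).length ≤ C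

/-- The set of letters occurring in a word. -/
def alph {A : Type*} (u : List A) : Set A := {a | a ∈ u}

/-- `alph(φ(S))` for a set of letters `S`: letters occurring in `φ(b)` for some `b ∈ S`. -/
def alphIm {A : Type*} (φ : A → List A) (S : Set A) : Set A := ⋃ b ∈ S, alph (φ b)

/-- A D0L-system is pushy if its language contains infinitely many words over bounded letters. -/
def Pushy {A : Type*} (φ : A → List A) (w : List A) : Prop :=
  {v ∈ LangD0L φ w | ∀ a ∈ v, BddLetter φ a}.Infinite

/-- A factorial language `L` is uniformly recurrent: for every `n` there is `K` such that
every element of `L` of length `K` contains every element of `L` of length `n` as a factor. -/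
def UnifRec {A : Type*} (L : Set (List A)) : Prop :=
  ∀ n : ℕ, ∃ K : ℕ, ∀ u ∈ L, u.length = K → ∀ v ∈ L, v.length = n → v <:+: u

/-- Vertices of the tree of invariant subalphabets of `φ`: nonempty sets `S` with
`alph(φ(S)) = S` containing an unbounded letter `a` with `alph(φ(a)) = S`. -/
def IsVertex {A : Type*} (φ : A → List A) (S : Set A) : Prop :=
  S.Nonempty ∧ alphIm φ S = S ∧ ∃ a ∈ S, ¬ BddLetter φ a ∧ alph (φ a) = S

/-- Leaves of the tree of invariant subalphabets: minimal vertices w.r.t. inclusion. -/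
def IsLeaf {A : Type*} (φ : A → List A) (S : Set A) : Prop :=
  IsVertex φ S ∧ ∀ T, IsVertex φ T → T ⊆ S → T = S

/-- Two words are conjugate: `u = xy` and `v = yx`. -/
def Conj {A : Type*} (u v : List A) : Prop := ∃ x y : List A, u = x ++ y ∧ v = y ++ x

/-- The prefix of length `n` of an infinite word. -/
def prefW {A : Type*} (w : ℕ → A) (n : ℕ) : List A := (List.range n).map w

/-! Assume `alph(φ²(c)) = alph(φ(c))` for every letter `c`. Then `c ∈ φ(a)` gives
`alph(φ(c)) ⊆ alph(φ(a))`, and an unbounded `a` has an unbounded letter `c` in `φ(a)`. Following such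
letters, the alphabets `alph(φ(a)) ⊇ alph(φ(c)) ⊇ ⋯` cannot shrink forever; where they stop, the
alphabet is a vertex of the tree. Hence below every unbounded `a` there is a vertex inside
`alph(φ(a))`; if `a` lies in a leaf `A'`, then `alph(φ(a)) ⊆ A'`, and minimality gives
`alph(φ(a)) = A'`. -/

section

variable {A : Type*}

lemma extM_singleton (φ : A → List A) (a : A) : extM φ [a] = φ a := by
  simp [extM]

lemma iterate_extM_append (φ : A → List A) (n : ℕ) (u v : List A) :
    (extM φ)^[n] (u ++ v) = (extM φ)^[n] u ++ (extM φ)^[n] v := by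
  induction n generalizing u v with
  | zero => rfl
  | succ n ih => simp only [Function.iterate_succ_apply, extM, List.flatMap_append, ← ih]

lemma exists_length_iterate_le_of_forall_bddLetter (φ : A → List A) {u : List A}
    (hu : ∀ c ∈ u, BddLetter φ c) : ∃ C, ∀ n, ((extM φ)^[n] u).length ≤ C := by
  induction u with
  | nil => exact ⟨0, fun n => by simp [extM, Function.iterate_fixed]⟩
  | cons c u ih =>
    obtain ⟨C₁, hC₁⟩ := hu c List.mem_cons_self
    obtain ⟨C₂, hC₂⟩ := ih fun d hd => hu d (List.mem_cons_of_mem c hd)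
    refine ⟨C₁ + C₂, fun n => ?_⟩
    rw [← List.singleton_append, iterate_extM_append, List.length_append]
    exact Nat.add_le_add (hC₁ n) (hC₂ n)

lemma exists_mem_not_bddLetter {φ : A → List A} {a : A} (ha : ¬ BddLetter φ a) :
    ∃ c ∈ φ a, ¬ BddLetter φ c := by
  by_contra! h
  obtain ⟨C, hC⟩ := exists_length_iterate_le_of_forall_bddLetter φ h
  refine ha ⟨C + 1, fun n => ?_⟩
  cases n with
  | zero => simp
  | succ n => rw [Function.iterate_succ_apply, extM_singleton]; exact (hC n).trans (Nat.le_succ C)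

lemma alphIm_alph (φ : A → List A) (u : List A) : alphIm φ (alph u) = alph (extM φ u) := by
  ext x
  simp [alphIm, alph, extM]

variable {φ : A → List A}

lemma alph_subset_of_mem (hφ : ∀ x, alph (extM φ (φ x)) = alph (φ x)) {a c : A}
    (hc : c ∈ φ a) : alph (φ c) ⊆ alph (φ a) := by
  rw [← hφ a, ← alphIm_alph]
  exact Set.subset_biUnion_of_mem (u := fun b => alph (φ b)) hc

lemma exists_isVertex_subset_alph (hφ : ∀ x, alph (extM φ (φ x)) = alph (φ x)) {a : A}
    (ha : ¬ BddLetter φ a) : ∃ S, IsVertex φ S ∧ S ⊆ alph (φ a) := by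
  induction hn : (alph (φ a)).ncard using Nat.strong_induction_on generalizing a with
  | _ n ih =>
  obtain ⟨c, hc, hcu⟩ := exists_mem_not_bddLetter ha
  rcases (alph_subset_of_mem hφ hc).eq_or_ssubset with heq | hlt
  · exact ⟨alph (φ a), ⟨⟨c, hc⟩, by rw [alphIm_alph, hφ], c, hc, hcu, heq⟩, subset_rfl⟩
  · obtain ⟨S, hS, hSc⟩ := ih _ (hn ▸ Set.ncard_lt_ncard hlt (List.finite_toSet _)) hcu rfl
    exact ⟨S, hS, hSc.trans hlt.subset⟩

lemma IsLeaf.alph_eq (hφ : ∀ x, alph (extM φ (φ x)) = alph (φ x)) {S : Set A}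
    (hS : IsLeaf φ S) {a : A} (ha : a ∈ S) (hau : ¬ BddLetter φ a) : alph (φ a) = S := by
  obtain ⟨⟨-, hinv, -⟩, hmin⟩ := hS
  have hsub : alph (φ a) ⊆ S := hinv ▸ Set.subset_biUnion_of_mem (u := fun b => alph (φ b)) ha
  obtain ⟨T, hT, hTa⟩ := exists_isVertex_subset_alph hφ hau
  exact hsub.antisymm ((hmin T hT (hTa.trans hsub)).symm ▸ hTa)

end

theorem stmt7_general {A : Type*} (φ : A → List A)
    (hstar : ∀ (a : A) (n : ℕ), 1 ≤ n → alph ((extM φ)^[n] [a]) = alph (φ a))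
    (A' : Set A) (hA' : IsLeaf φ A')
    (a b : A) (ha : a ∈ A') (hb : b ∈ A')
    (hau : ¬ BddLetter φ a) :
    b ∈ alph (φ a) := by
  have hφ : ∀ c, alph (extM φ (φ c)) = alph (φ c) := fun c => by
    simpa [Function.iterate_succ_apply, extM_singleton] using hstar c 2 one_le_two
  exact (IsLeaf.alph_eq hφ hA' ha hau).symm ▸ hb

/-- Under Assumption ∗, if `A'` is a leaf of the tree of invariant
subalphabets, then for all unbounded `a, b ∈ A'`, the letter `b` occurs in `φ(a)`. -/
theorem stmt7 {A : Type*} [Fintype A] (φ : A → List A) (hφ : NonErasing φ)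
    (hstar : ∀ (a : A) (n : ℕ), 1 ≤ n → alph ((extM φ)^[n] [a]) = alph (φ a))
    (A' : Set A) (hA' : IsLeaf φ A')
    (a b : A) (ha : a ∈ A') (hb : b ∈ A')
    (hau : ¬ BddLetter φ a) (hbu : ¬ BddLetter φ b) :
    b ∈ alph (φ a) :=
  stmt7_general φ hstar A' hA' a b ha hb hau
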